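/- arXiv:2202.13783 — 3 statements merged into one kernel-verified Lean document; each statement's English description precedes it below -/
import Mathlib

section
/- Let m be a positive integer and N = 16m² + 1 be composite. Then there exists a positive integer u such that (8u + 1)² − N is a perfect square, N = (8u + 1)² − ((8u+1)² − N), the two numbers 8u + 1 ± √((8u+1)² − N) are proper factors of N, and u satisfies the bounds N ≤ (8u + 1)² and 40u + 5 ≤ N. -/
/-! A prime factor `p` of `N = (4m)² + 1` sees `-1` as a square, so `p ≡ 1 (mod 4)`. Taking `p` the
least prime factor and `q = N / p`, this together with `pq ≡ 1 (mod 16)` forces `p + q ≡ 2 (mod 16)`.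
Hence `(p + q) / 2 = 8u + 1` and `d = (q - p) / 2` give Fermat's representation
`N = (8u + 1)² - d²` with `8u + 1 - d = p` and `8u + 1 + d = q`; the lower bound on `N` is
`5 (p + q) ≤ 2pq`, valid as `p, q ≥ 5`. -/

theorem Nat.Prime.mod_four_eq_one_of_dvd_sq_add_one {p n : ℕ} (hp : p.Prime) (hp2 : p ≠ 2)
    (hdvd : p ∣ n ^ 2 + 1) : p % 4 = 1 := by
  have : Fact p.Prime := ⟨hp⟩
  have hsq : (n : ZMod p) ^ 2 = -1 := by
    rw [eq_neg_iff_add_eq_zero]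
    exact_mod_cast (ZMod.natCast_eq_zero_iff _ p).mpr hdvd
  have h3 := ZMod.mod_four_ne_three_of_sq_eq_neg_one hsq
  have h2 := hp.eq_two_or_odd.resolve_left hp2
  omega

theorem add_mod_sixteen_eq_two {a b : ℕ} (ha : a % 4 = 1) (hab : a * b % 16 = 1) :
    (a + b) % 16 = 2 := by
  rw [Nat.mul_mod] at hab
  have hb : b % 16 < 16 := Nat.mod_lt _ (by norm_num)
  have ha16 : a % 16 = 1 ∨ a % 16 = 5 ∨ a % 16 = 9 ∨ a % 16 = 13 := by omega
  rcases ha16 with h | h | h | h <;> rw [h] at hab <;> omega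

theorem exists_mul_eq_sixteen_mul_sq_add_one {m : ℕ} (hm : 0 < m)
    (hcomp : ¬ (16 * m ^ 2 + 1).Prime) :
    ∃ a b, a * b = 16 * m ^ 2 + 1 ∧ 5 ≤ a ∧ a ≤ b ∧ (a + b) % 16 = 2 := by
  set N := 16 * m ^ 2 + 1
  have hm2 : 1 ≤ m ^ 2 := Nat.one_le_pow _ _ hm
  have hN1 : N ≠ 1 := by omega
  set p := N.minFac
  have hp : p.Prime := Nat.minFac_prime hN1
  have hpN : p ∣ N := Nat.minFac_dvd N
  have hp2 : p ≠ 2 := fun h => by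
    have : 2 ∣ N := h ▸ hpN
    omega
  have hp4 : p % 4 = 1 :=
    hp.mod_four_eq_one_of_dvd_sq_add_one hp2 (by rwa [show (4 * m) ^ 2 + 1 = N by ring])
  have hpq : p * (N / p) = N := Nat.mul_div_cancel' hpN
  refine ⟨p, N / p, hpq, by have := hp.two_le; omega, ?_, ?_⟩
  · refine Nat.le_of_mul_le_mul_left ?_ hp.pos
    rw [hpq, ← sq]
    exact Nat.minFac_sq_le_self (by omega) hcomp
  · exact add_mod_sixteen_eq_two hp4 (by omega)

theorem Nat.sub_mul_add_add_sq {c d : ℕ} (h : d ≤ c) : (c - d) * (c + d) + d ^ 2 = c ^ 2 := by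
  obtain ⟨e, rfl⟩ := Nat.exists_eq_add_of_le h
  rw [Nat.add_sub_cancel_left]
  ring

theorem stmt_2 (m : ℕ) (hm : 0 < m) (N : ℕ) (hN : N = 16 * m ^ 2 + 1)
    (hcomp : ¬ N.Prime) :
    ∃ u : ℕ, 0 < u ∧ ∃ d : ℕ, (8 * u + 1) ^ 2 = N + d ^ 2 ∧
      N = (8 * u + 1) ^ 2 - d ^ 2 ∧
      ((8 * u + 1 + d) ∣ N ∧ 1 < 8 * u + 1 + d ∧ 8 * u + 1 + d < N) ∧
      ((8 * u + 1 - d) ∣ N ∧ 1 < 8 * u + 1 - d ∧ 8 * u + 1 - d < N) ∧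
      N ≤ (8 * u + 1) ^ 2 ∧ 40 * u + 5 ≤ N := by
  obtain ⟨a, b, hab, ha, hle, hsum⟩ := exists_mul_eq_sixteen_mul_sq_add_one hm (hN ▸ hcomp)
  rw [← hN] at hab
  subst hab
  obtain ⟨u, hu⟩ : ∃ u, a + b = 16 * u + 2 := ⟨(a + b) / 16, by omega⟩
  set d := b - (8 * u + 1)
  have hsub : 8 * u + 1 - d = a := by omega
  have hadd : 8 * u + 1 + d = b := by omega
  have hsq : a * b + d ^ 2 = (8 * u + 1) ^ 2 := by
    rw [← Nat.sub_mul_add_add_sq (by omega : d ≤ 8 * u + 1), hsub, hadd]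
  refine ⟨u, by omega, d, hsq.symm, by omega, ?_, ?_, by omega, ?_⟩
  · rw [hadd]
    exact ⟨dvd_mul_left b a, by omega, by nlinarith⟩
  · rw [hsub]
    exact ⟨dvd_mul_right a b, by omega, by nlinarith⟩
  · nlinarith
end

section
/- Let m be a nonnegative integer and N = 4(2m + 1)² + 1 be composite. Then every proper factor of N can be expressed as 8u + 3 + √((8u + 3)² − N) or 8u + 3 − √((8u + 3)² − N) for some positive integer u such that (8u + 3)² − N is a perfect square, N ≤ (8u + 3)², and 40u + 15 ≤ N. -/
/-!
Write `N = x² + 1` with `x = 2(2m + 1)` even. Then `-1` is a square modulo every divisor of `N`,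
and all these divisors are odd, so each of them is `≡ 1 (mod 4)`. For a factorisation
`N = F G` with `G ≤ F` put `a = (F + G)/2` and `d = (F - G)/2`, so that `a² = N + d²`.
Since `N ≡ 5 (mod 16)` and `F ≡ G ≡ 1 (mod 4)`, the pair `(F, G)` is `(1, 5)` or `(9, 13)`
modulo 16 up to order, so `F + G ≡ 6 (mod 16)` and `a = 8u + 3`. Finally `G ≥ 5` gives
`5a ≤ 5F ≤ N`, which is the bound `40u + 15 ≤ N`.
-/

theorem Nat.mod_four_eq_one_of_isSquare_neg_one {n : ℕ} (hn : Odd n)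
    (hs : IsSquare (-1 : ZMod n)) : n % 4 = 1 := by
  induction n using induction_on_primes with
  | zero => exact absurd hn (by decide)
  | one => rfl
  | prime_mul p n hp ih =>
    have : Fact p.Prime := ⟨hp⟩
    obtain ⟨y, hy⟩ := ZMod.isSquare_neg_one_of_dvd (dvd_mul_right p n) hs
    have hp3 : p % 4 ≠ 3 := ZMod.mod_four_ne_three_of_sq_eq_neg_one (y := y) (by rw [hy, sq])
    have hn4 : n % 4 = 1 :=
      ih (Nat.Odd.of_mul_right hn) (ZMod.isSquare_neg_one_of_dvd (dvd_mul_left n p) hs)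
    have hp2 : p % 2 = 1 := Nat.odd_iff.mp (Nat.Odd.of_mul_left hn)
    rw [Nat.mul_mod, hn4]
    omega

theorem ZMod.isSquare_neg_one_sq_add_one (x : ℕ) : IsSquare (-1 : ZMod (x ^ 2 + 1)) :=
  ⟨x, by
    rw [← sq, eq_comm, eq_neg_iff_add_eq_zero, ← Nat.cast_pow, ← Nat.cast_succ,
      ZMod.natCast_self]⟩

theorem Nat.mod_four_eq_one_of_dvd_sq_add_one {f x : ℕ} (hx : Even x) (hf : f ∣ x ^ 2 + 1) :
    f % 4 = 1 :=
  Nat.mod_four_eq_one_of_isSquare_neg_one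
    (Odd.of_dvd_nat (by simpa [parity_simps] using hx) hf)
    (ZMod.isSquare_neg_one_of_dvd hf (ZMod.isSquare_neg_one_sq_add_one x))

theorem Nat.add_mod_sixteen_of_mul_mod_sixteen {F G : ℕ} (hF : F % 4 = 1)
    (h : F * G % 16 = 5) : (F + G) % 16 = 6 := by
  rw [Nat.mul_mod] at h
  rw [Nat.add_mod]
  have hG : G % 16 < 16 := Nat.mod_lt _ (by norm_num)
  rcases (by omega : F % 16 = 1 ∨ F % 16 = 5 ∨ F % 16 = 9 ∨ F % 16 = 13) with
    hF' | hF' | hF' | hF' <;> rw [hF'] at h ⊢ <;> interval_cases G % 16 <;> simp_all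

theorem exists_eight_mul_add_three_sq_eq_mul_add_sq {F G : ℕ} (hG : 5 ≤ G) (hGF : G ≤ F)
    (hsum : (F + G) % 16 = 6) :
    ∃ u d : ℕ, 0 < u ∧ (8 * u + 3) ^ 2 = F * G + d ^ 2 ∧ 40 * u + 15 ≤ F * G ∧
      8 * u + 3 + d = F ∧ 8 * u + 3 - d = G := by
  obtain ⟨d, rfl⟩ : ∃ d, F = G + 2 * d := ⟨(F - G) / 2, by omega⟩
  obtain ⟨u, hu⟩ : ∃ u, G + d = 8 * u + 3 := ⟨(G + d - 3) / 8, by omega⟩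
  refine ⟨u, d, by omega, ?_, ?_, by omega, by omega⟩
  · rw [← hu]; ring
  · nlinarith

theorem stmt_13_general (m : ℕ) (N : ℕ) (hN : N = 4 * (2 * m + 1) ^ 2 + 1) :
    ∀ f : ℕ, f ∣ N → 1 < f → f < N →
      ∃ u d : ℕ, 0 < u ∧ (8 * u + 3) ^ 2 = N + d ^ 2 ∧
        N ≤ (8 * u + 3) ^ 2 ∧ 40 * u + 15 ≤ N ∧
        (f = 8 * u + 3 + d ∨ f = 8 * u + 3 - d) := by
  rintro f ⟨g, rfl⟩ hf hfN
  have hmod4 : ∀ k, k ∣ f * g → k % 4 = 1 := fun k hk =>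
    Nat.mod_four_eq_one_of_dvd_sq_add_one (x := 2 * (2 * m + 1)) (by simp)
      (by rwa [show (2 * (2 * m + 1)) ^ 2 + 1 = f * g by rw [hN]; ring])
  have hf4 := hmod4 f (dvd_mul_right f g)
  have hg4 := hmod4 g (dvd_mul_left g f)
  have hg1 : 1 < g := by by_contra! h; interval_cases g <;> simp_all
  have h16 : f * g % 16 = 5 := by rw [hN]; ring_nf; omega
  rcases le_total g f with hgf | hfg
  · obtain ⟨u, d, hu, hsq, hle, hF, -⟩ := exists_eight_mul_add_three_sq_eq_mul_add_sq
      (by omega) hgf (Nat.add_mod_sixteen_of_mul_mod_sixteen hf4 h16)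
    exact ⟨u, d, hu, hsq, by omega, hle, .inl hF.symm⟩
  · rw [mul_comm] at h16 ⊢
    obtain ⟨u, d, hu, hsq, hle, -, hG⟩ := exists_eight_mul_add_three_sq_eq_mul_add_sq
      (by omega) hfg (Nat.add_mod_sixteen_of_mul_mod_sixteen hg4 h16)
    exact ⟨u, d, hu, hsq, by omega, hle, .inr hG.symm⟩

theorem stmt_13 (m : ℕ) (N : ℕ) (hN : N = 4 * (2 * m + 1) ^ 2 + 1)
    (hcomp : ¬ N.Prime) :
    ∀ f : ℕ, f ∣ N → 1 < f → f < N →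
      ∃ u d : ℕ, 0 < u ∧ (8 * u + 3) ^ 2 = N + d ^ 2 ∧
        N ≤ (8 * u + 3) ^ 2 ∧ 40 * u + 15 ≤ N ∧
        (f = 8 * u + 3 + d ∨ f = 8 * u + 3 - d) :=
  stmt_13_general m N hN
end

section
/- Let n ≥ 5 be an integer and let F_n = 2^(2^n) + 1 be the n-th Fermat number. If F_n is composite, then there exists a positive integer λ such that (2^(2n+3)·λ + 1)² − F_n is a perfect square, the two numbers 2^(2n+3)·λ + 1 ± √((2^(2n+3)·λ + 1)² − F_n) are proper factors of F_n whose product is F_n, and λ satisfies F_n ≤ (2^(2n+3)·λ + 1)² and λ ≤ 2^(2^n − (3n+5)). -/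
/-!
Every divisor of `Fₙ` (`n ≥ 2`) is `≡ 1 [MOD 2^(n+2)]`, because its prime factors are. For a
factorisation `Fₙ = a * b` with `1 < a ≤ b`, write `a = x + 1`, `b = y + 1`: then
`x + y + x * y = 2^(2^n)`, and since `2^(n+2)` divides both `x` and `y`, `2^(2n+4)` divides `x + y`.
So the midpoint `c = (a + b) / 2` is `2^(2n+3) * λ + 1`, and `Fₙ = c² - d²` with `d = (b - a) / 2`.
The bound on `λ` comes from `2^(n+2) * (x + y) ≤ 2 * x * y < 2 * 2^(2^n)`.
-/

theorem Nat.modEq_one_of_dvd_of_forall_prime {m N d : ℕ} (hN : N ≠ 0)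
    (hp : ∀ p, p.Prime → p ∣ N → p ≡ 1 [MOD m]) (hd : d ∣ N) : d ≡ 1 [MOD m] := by
  induction d using Nat.recOnMul with
  | zero => exact absurd (Nat.eq_zero_of_zero_dvd hd) hN
  | one => rfl
  | prime p hp' => exact hp p hp' hd
  | mul a b iha ihb =>
    simpa using (iha (dvd_of_mul_right_dvd hd)).mul (ihb (dvd_of_mul_left_dvd hd))

theorem Nat.modEq_one_of_dvd_fermatNumber {n d : ℕ} (hn : 1 < n) (hd : d ∣ fermatNumber n) :
    d ≡ 1 [MOD 2 ^ (n + 2)] := by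
  have hF : fermatNumber n ≠ 0 := by have := three_le_fermatNumber n; omega
  refine modEq_one_of_dvd_of_forall_prime hF (fun p hp hpd => ?_) hd
  obtain ⟨k, rfl⟩ := fermat_primeFactors_one_lt n p hn hp hpd
  exact (Nat.modEq_zero_iff_dvd.2 (dvd_mul_left (2 ^ (n + 2)) k)).add_right 1

theorem Nat.exists_mul_eq_of_not_prime {N : ℕ} (hN : 2 ≤ N) (h : ¬ N.Prime) :
    ∃ a b, a * b = N ∧ 1 < a ∧ a ≤ b ∧ b < N := by
  obtain ⟨a, b, ha, hb, hab⟩ := (not_prime_iff_exists_mul_eq hN).1 h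
  refine ⟨min a b, max a b, by rw [min_mul_max, hab], ?_, min_le_max, max_lt ha hb⟩
  by_contra! h1
  have : min a b * max a b < N := by
    calc min a b * max a b ≤ 1 * max a b := Nat.mul_le_mul_right _ h1
      _ < N := by simpa using max_lt ha hb
  rw [min_mul_max] at this
  omega

theorem Nat.sq_dvd_add_of_dvd_of_dvd {M x y : ℕ} (hx : M ∣ x) (hy : M ∣ y)
    (h : M ^ 2 ∣ x + y + x * y) : M ^ 2 ∣ x + y :=
  (Nat.dvd_add_left (sq M ▸ mul_dvd_mul hx hy)).1 h

theorem Nat.sq_eq_mul_add_sq_of_add_eq_two_mul {a b c : ℕ} (hab : a ≤ b) (hc : a + b = 2 * c) :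
    c ^ 2 = a * b + (c - a) ^ 2 ∧ c + (c - a) = b ∧ c - (c - a) = a := by
  obtain ⟨e, rfl⟩ : ∃ e, c = a + e := ⟨c - a, by omega⟩
  obtain rfl : b = a + 2 * e := by omega
  refine ⟨?_, by omega, by omega⟩
  rw [Nat.add_sub_cancel_left]
  ring

theorem Nat.lt_two_pow_sub_of_two_pow_mul_lt {k m l : ℕ} (h : 2 ^ k * l < 2 ^ m) :
    l < 2 ^ (m - k) := by
  by_contra! hl
  have : 2 ^ m ≤ 2 ^ k * 2 ^ (m - k) := by
    rw [← pow_add]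
    exact Nat.pow_le_pow_right two_pos (by omega)
  linarith [Nat.mul_le_mul_left (2 ^ k) hl]

theorem Nat.two_mul_add_four_le_two_pow {n : ℕ} (hn : 4 ≤ n) : 2 * n + 4 ≤ 2 ^ n := by
  obtain ⟨m, rfl⟩ : ∃ m, n = m + 2 := ⟨n - 2, by omega⟩
  have := Nat.lt_two_pow_self (n := m)
  rw [pow_add]
  omega

theorem Nat.exists_add_eq_of_mul_eq_fermatNumber {n a b : ℕ} (hn : 4 ≤ n)
    (hab : a * b = fermatNumber n) (ha : 1 < a) (hb : 1 < b) :
    ∃ l, 0 < l ∧ a + b = 2 * (2 ^ (2 * n + 3) * l + 1) ∧ l < 2 ^ (2 ^ n - (3 * n + 5)) := by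
  have hx : 2 ^ (n + 2) ∣ a - 1 := (Nat.modEq_iff_dvd' ha.le).1
    (modEq_one_of_dvd_fermatNumber (by omega) (Dvd.intro b hab)).symm
  have hy : 2 ^ (n + 2) ∣ b - 1 := (Nat.modEq_iff_dvd' hb.le).1
    (modEq_one_of_dvd_fermatNumber (by omega) (Dvd.intro_left a hab)).symm
  obtain ⟨x, rfl⟩ : ∃ x, a = x + 1 := ⟨a - 1, by omega⟩
  obtain ⟨y, rfl⟩ : ∃ y, b = y + 1 := ⟨b - 1, by omega⟩
  simp only [Nat.add_sub_cancel] at hx hy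
  have hxy : x + y + x * y = 2 ^ 2 ^ n := by
    rw [fermatNumber] at hab
    linarith
  have hsq : (2 ^ (n + 2)) ^ 2 ∣ x + y + x * y := by
    rw [hxy, ← pow_mul]
    exact Nat.pow_dvd_pow 2 (by linarith [two_mul_add_four_le_two_pow hn])
  obtain ⟨l, hl⟩ := sq_dvd_add_of_dvd_of_dvd hx hy hsq
  refine ⟨l, Nat.pos_of_ne_zero ?_, by rw [add_add_add_comm, hl]; ring, ?_⟩
  · rintro rfl
    omega
  have hMx : 2 ^ (n + 2) ≤ x := Nat.le_of_dvd (by omega) hx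
  have hMy : 2 ^ (n + 2) ≤ y := Nat.le_of_dvd (by omega) hy
  have hbound : 2 ^ (n + 2) * (x + y) < 2 * (x + y + x * y) := by nlinarith
  rw [hxy, hl, ← mul_assoc, ← pow_mul, ← pow_add, ← pow_succ'] at hbound
  convert lt_two_pow_sub_of_two_pow_mul_lt hbound using 2
  omega

theorem stmt_17 (n : ℕ) (hn : 5 ≤ n) (F : ℕ) (hF : F = 2 ^ (2 ^ n) + 1)
    (hcomp : ¬ F.Prime) :
    ∃ l : ℕ, 0 < l ∧ ∃ d : ℕ, (2 ^ (2 * n + 3) * l + 1) ^ 2 = F + d ^ 2 ∧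
      F = (2 ^ (2 * n + 3) * l + 1 + d) * (2 ^ (2 * n + 3) * l + 1 - d) ∧
      ((2 ^ (2 * n + 3) * l + 1 + d) ∣ F ∧ 1 < 2 ^ (2 * n + 3) * l + 1 + d ∧
        2 ^ (2 * n + 3) * l + 1 + d < F) ∧
      ((2 ^ (2 * n + 3) * l + 1 - d) ∣ F ∧ 1 < 2 ^ (2 * n + 3) * l + 1 - d ∧
        2 ^ (2 * n + 3) * l + 1 - d < F) ∧
      F ≤ (2 ^ (2 * n + 3) * l + 1) ^ 2 ∧ l ≤ 2 ^ (2 ^ n - (3 * n + 5)) := by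
  have hF2 : 2 ≤ F := by
    rw [hF]
    exact Nat.succ_le_succ Nat.one_le_two_pow
  obtain ⟨a, b, hab, ha, hle, hbF⟩ := Nat.exists_mul_eq_of_not_prime hF2 hcomp
  obtain ⟨l, hl, hsum, hlt⟩ :=
    Nat.exists_add_eq_of_mul_eq_fermatNumber (by omega) (hab.trans hF) ha (by omega)
  obtain ⟨hsq, hplus, hminus⟩ := Nat.sq_eq_mul_add_sq_of_add_eq_two_mul hle hsum
  rw [hab] at hsq
  refine ⟨l, hl, _, hsq, ?_, ?_, ?_, by rw [hsq]; exact Nat.le_add_right _ _, hlt.le⟩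
  · rw [hplus, hminus, mul_comm, hab]
  · rw [hplus]
    exact ⟨Dvd.intro_left a hab, by omega, hbF⟩
  · rw [hminus]
    exact ⟨Dvd.intro b hab, ha, by omega⟩
end
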